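/- Let g be an odd-dimensional filiform Lie algebra of dimension n. Then χ(g) = 1 if and only if [g_i, g_{n−i}] ≠ 0 for all i = 1,...,n−1. -/
import Mathlib


open Module

def lieStab (K L : Type*) [Field K] [LieRing L] [LieAlgebra K L] (ℓ : Module.Dual K L) :
    Submodule K L where
  carrier := {y | ∀ x : L, ℓ ⁅x, y⁆ = 0}
  add_mem' := by
    intro a b ha hb x
    simp [lie_add, ha x, hb x]
  zero_mem' := by intro x; simp
  smul_mem' := by
    intro c a ha x
    simp [lie_smul, ha x]

noncomputable def lieIndex (K L : Type*) [Field K] [LieRing L] [LieAlgebra K L] : ℕ :=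
  sInf {d | ∃ ℓ : Module.Dual K L, d = Module.finrank K (lieStab K L ℓ)}

noncomputable def lieAlpha (K L : Type*) [Field K] [LieRing L] [LieAlgebra K L] : ℕ :=
  sSup {d | ∃ S : LieSubalgebra K L, IsLieAbelian (↥S) ∧ d = Module.finrank K (↥S)}

abbrev FreeNilpotentLie (K : Type*) [Field K] (g c : ℕ) :=
  FreeLieAlgebra K (Fin g) ⧸
    LieModule.lowerCentralSeries K (FreeLieAlgebra K (Fin g)) (FreeLieAlgebra K (Fin g)) c

/-- The subspace `g_i` (1-based indexing: `g_i` is spanned by `e_i, …, e_n`, where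
`e_m = b ⟨m-1⟩`). -/
def gSpan {K L : Type*} [Field K] [LieRing L] [LieAlgebra K L] {n : ℕ}
    (b : Basis (Fin n) K L) (i : ℕ) : Submodule K L :=
  Submodule.span K {x | ∃ j : Fin n, i ≤ j.val + 1 ∧ x = b j}

/-- `b` is an adapted (Vergne) basis of the filiform Lie algebra `L`, writing
`e_m = b ⟨m-1⟩` for the 1-based basis vectors. -/
def IsAdaptedBasis {K L : Type*} [Field K] [LieRing L] [LieAlgebra K L] {n : ℕ}
    (hn : 3 ≤ n) (b : Basis (Fin n) K L) : Prop :=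
  (∀ (i : Fin n) (h1 : 1 ≤ i.val) (h2 : i.val ≤ n - 2),
      ⁅b ⟨0, by omega⟩, b i⁆ = b ⟨i.val + 1, by omega⟩) ∧
  ⁅b ⟨0, by omega⟩, b ⟨n - 1, by omega⟩⁆ = 0 ∧
  ⁅b ⟨1, by omega⟩, b ⟨2, by omega⟩⁆ ∈ gSpan b 5 ∧
  (∀ i j : Fin n, i.val + j.val + 2 ≤ n → ⁅b i, b j⁆ ∈ gSpan b (i.val + j.val + 2))

/-- `L` is filiform of dimension `n`: nilpotent of nilpotency class exactly `n - 1`. -/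
def IsFiliform (K L : Type*) [Field K] [LieRing L] [LieAlgebra K L] (n : ℕ) : Prop :=
  Module.finrank K L = n ∧
    LieModule.lowerCentralSeries K L L (n - 1) = ⊥ ∧
    LieModule.lowerCentralSeries K L L (n - 2) ≠ ⊥


section Lemmas
variable {K L : Type*} [Field K] [LieRing L] [LieAlgebra K L] {n : ℕ} (b : Basis (Fin n) K L)

lemma mem_gSpan {m : ℕ} (j : Fin n) (h : m ≤ j.val + 1) : b j ∈ gSpan b m :=
  Submodule.subset_span ⟨j, h, rfl⟩

lemma gSpan_eq_image (m : ℕ) :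
    gSpan b m = Submodule.span K (b '' {j : Fin n | m ≤ j.val + 1}) := by
  unfold gSpan
  congr 1
  ext x
  constructor
  · rintro ⟨j, hj, rfl⟩; exact ⟨j, hj, rfl⟩
  · rintro ⟨j, hj, rfl⟩; exact ⟨j, hj, rfl⟩

lemma finrank_gSpan (m : ℕ) (hm : 1 ≤ m) (hmn : m ≤ n) :
    finrank K (gSpan b m) = n + 1 - m := by
  have hset : {j : Fin n | m ≤ j.val + 1} = ↑(Finset.Ici (⟨m - 1, by omega⟩ : Fin n)) := by
    ext j
    simp only [Set.mem_setOf_eq, Finset.coe_Ici, Set.mem_Ici, Fin.le_def]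
    omega
  rw [gSpan_eq_image, hset]
  have : (b '' ↑(Finset.Ici (⟨m - 1, by omega⟩ : Fin n))) =
      Set.range (fun j : ↥(Finset.Ici (⟨m - 1, by omega⟩ : Fin n)) => b j) := by
    rw [Set.image_eq_range]; rfl
  rw [this]
  have hli : LinearIndependent K (fun j : ↥(Finset.Ici (⟨m - 1, by omega⟩ : Fin n)) => b j.val) :=
    b.linearIndependent.comp _ Subtype.val_injective
  rw [finrank_span_eq_card hli, Fintype.card_coe, Fin.card_Ici]
  simp only [Fin.val_mk]
  omega

lemma gSpan_le_span_singleton (hn : 1 ≤ n) :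
    gSpan b n ≤ K ∙ b ⟨n - 1, by omega⟩ := by
  rw [gSpan_eq_image]
  apply Submodule.span_le.mpr
  rintro x ⟨j, hj, rfl⟩
  have : j = ⟨n - 1, by omega⟩ := by
    apply Fin.ext; simp at hj ⊢; omega
  rw [this]
  exact Submodule.mem_span_singleton_self _

end Lemmas

section Lemmas2
variable {K L : Type*} [Field K] [LieRing L] [LieAlgebra K L] {n : ℕ} (b : Basis (Fin n) K L)
  (hn : 3 ≤ n) (hb : IsAdaptedBasis hn b)

include hb

lemma e_mem_lcs : ∀ (m : ℕ) (hm : m < n), 1 ≤ m →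
    b ⟨m, hm⟩ ∈ LieModule.lowerCentralSeries K L L (m - 1) := by
  intro m
  induction m with
  | zero => omega
  | succ k ih =>
    intro hm _
    rcases Nat.lt_or_ge k 1 with h | hk1
    · have : k = 0 := by omega
      subst this
      simp
    · have hkn : k < n := by omega
      have hk2 : k ≤ n - 2 := by omega
      have hb1 := hb.1 ⟨k, hkn⟩ hk1 hk2
      have he : b ⟨k + 1, hm⟩ = ⁅b ⟨0, by omega⟩, b ⟨k, hkn⟩⁆ := hb1.symm
      rw [he]
      have hmem := ih hkn hk1
      have hs : k + 1 - 1 = (k - 1) + 1 := by omega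
      rw [hs, LieModule.lowerCentralSeries_succ]
      exact LieSubmodule.lie_mem_lie (LieSubmodule.mem_top _) hmem

lemma central (hfil2 : LieModule.lowerCentralSeries K L L (n - 1) = ⊥) (x : L) :
    ⁅x, b ⟨n - 1, by omega⟩⁆ = 0 := by
  have hmem := e_mem_lcs b hn hb (n - 1) (by omega) (by omega)
  have h2 : ⁅x, b ⟨n - 1, by omega⟩⁆ ∈ LieModule.lowerCentralSeries K L L ((n - 1 - 1) + 1) := by
    rw [LieModule.lowerCentralSeries_succ]
    exact LieSubmodule.lie_mem_lie (LieSubmodule.mem_top _) hmem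
  have hs : (n - 1 - 1) + 1 = n - 1 := by omega
  rw [hs, hfil2] at h2
  simpa using h2

end Lemmas2
section Lemmas3
variable {K L : Type*} [Field K] [LieRing L] [LieAlgebra K L] {n : ℕ}

/-- Total version of the basis, `0`-based, zero out of range. -/
noncomputable def Evec (b : Basis (Fin n) K L) (t : ℕ) : L :=
  if h : t < n then b ⟨t, h⟩ else 0

lemma Evec_eq (b : Basis (Fin n) K L) (t : ℕ) (h : t < n) : Evec b t = b ⟨t, h⟩ := dif_pos h

lemma Evec_eq_zero (b : Basis (Fin n) K L) (t : ℕ) (h : n ≤ t) : Evec b t = 0 :=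
  dif_neg (by omega)

variable (b : Basis (Fin n) K L) (hn : 3 ≤ n) (hb : IsAdaptedBasis hn b)

lemma Evec_mem_gSpan (m t : ℕ) (h : m ≤ t + 1) (ht : t < n) : Evec b t ∈ gSpan b m := by
  rw [Evec_eq b t ht]
  exact mem_gSpan b ⟨t, ht⟩ (by simpa using h)

include hb

lemma lie_E0 (t : ℕ) (h1 : 1 ≤ t) : ⁅Evec b 0, Evec b t⁆ = Evec b (t + 1) := by
  rcases Nat.lt_or_ge t (n - 1) with h | h
  · rw [Evec_eq b 0 (by omega), Evec_eq b t (by omega), Evec_eq b (t + 1) (by omega)]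
    have h2 : (⟨t, by omega⟩ : Fin n).val ≤ n - 2 := by simp; omega
    exact hb.1 ⟨t, by omega⟩ h1 h2
  · rcases Nat.lt_or_ge t n with h' | h'
    · have : t = n - 1 := by omega
      subst this
      rw [Evec_eq b 0 (by omega), Evec_eq b (n - 1) (by omega), Evec_eq_zero b (n - 1 + 1) (by omega)]
      exact hb.2.1
    · rw [Evec_eq_zero b t h', Evec_eq_zero b (t + 1) (by omega), lie_zero]

lemma lie_E_gSpan (t u : ℕ) (h : t + u + 2 ≤ n) :
    ⁅Evec b t, Evec b u⁆ ∈ gSpan b (t + u + 2) := by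
  rw [Evec_eq b t (by omega), Evec_eq b u (by omega)]
  have h4 := hb.2.2.2 ⟨t, by omega⟩ ⟨u, by omega⟩ (by simpa using h)
  simpa using h4

lemma lie_E0_gSpan_n (z : L) (hz : z ∈ gSpan b n) : ⁅Evec b 0, z⁆ = 0 := by
  have hz' : z ∈ K ∙ b ⟨n - 1, by omega⟩ := gSpan_le_span_singleton b (by omega) hz
  rw [Submodule.mem_span_singleton] at hz'
  obtain ⟨c, rfl⟩ := hz'
  rw [lie_smul, Evec_eq b 0 (by omega)]
  rw [hb.2.1, smul_zero]

lemma central' (hfil2 : LieModule.lowerCentralSeries K L L (n - 1) = ⊥) (x : L) :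
    ⁅x, Evec b (n - 1)⁆ = 0 := by
  rw [Evec_eq b (n - 1) (by omega)]
  exact central b hn hb hfil2 x

lemma bracket_sum_n1 (hodd : Odd n)
    (hfil2 : LieModule.lowerCentralSeries K L L (n - 1) = ⊥) :
    ∀ t u : ℕ, t + u = n - 1 → ⁅Evec b t, Evec b u⁆ = 0 := by
  obtain ⟨k, hk⟩ := hodd
  have hk1 : 1 ≤ k := by omega
  -- the chain relation
  have hR : ∀ t : ℕ, 1 ≤ t → t ≤ n - 3 →
      ⁅Evec b (t + 1), Evec b (n - 1 - (t + 1))⁆ = -⁅Evec b t, Evec b (n - 1 - t)⁆ := by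
    intro t ht1 ht3
    have hu : n - 1 - (t + 1) = n - 2 - t := by omega
    have hmem : ⁅Evec b t, Evec b (n - 2 - t)⁆ ∈ gSpan b n := by
      have := lie_E_gSpan b hn hb t (n - 2 - t) (by omega)
      have he : t + (n - 2 - t) + 2 = n := by omega
      rwa [he] at this
    have hz : ⁅Evec b 0, ⁅Evec b t, Evec b (n - 2 - t)⁆⁆ = 0 :=
      lie_E0_gSpan_n b hn hb _ hmem
    rw [leibniz_lie] at hz
    rw [lie_E0 b hn hb t ht1] at hz
    rw [lie_E0 b hn hb (n - 2 - t) (by omega)] at hz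
    have h1 : n - 2 - t + 1 = n - 1 - t := by omega
    rw [h1] at hz
    rw [hu]
    exact eq_neg_of_add_eq_zero_left hz
  -- midpoint
  have hmid : ⁅Evec b k, Evec b (n - 1 - k)⁆ = 0 := by
    have : n - 1 - k = k := by omega
    rw [this, lie_self]
  -- upward chain
  have hup : ∀ t : ℕ, k ≤ t → ⁅Evec b t, Evec b (n - 1 - t)⁆ = 0 := by
    intro t ht
    induction t, ht using Nat.le_induction with
    | base => exact hmid
    | succ t ht ih =>
      rcases Nat.lt_or_ge t (n - 2) with h | h
      · rw [hR t (by omega) (by omega), ih, neg_zero]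
      · -- t + 1 ≥ n - 1 : partner is ≤ 0 ... t+1 could be ≥ n-1, partner n-1-(t+1)=0
        rcases Nat.lt_or_ge (t + 1) n with h' | h'
        · -- t + 1 ∈ [n-1, n-1], partner 0
          have ht1 : t + 1 = n - 1 := by omega
          have hp : n - 1 - (t + 1) = 0 := by omega
          rw [hp, ht1, ← lie_skew, central' b hn hb hfil2, neg_zero]
        · rw [Evec_eq_zero b (t + 1) h', zero_lie]
  -- downward chain
  have hdown : ∀ d : ℕ, d ≤ k - 1 → ⁅Evec b (k - d), Evec b (n - 1 - (k - d))⁆ = 0 := by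
    intro d
    induction d with
    | zero => exact fun _ => by simpa using hmid
    | succ d ih =>
      intro hd
      have h1 : (k - (d + 1)) + 1 = k - d := by omega
      have h2 := hR (k - (d + 1)) (by omega) (by omega)
      rw [h1] at h2
      rw [ih (by omega)] at h2
      exact neg_eq_zero.mp h2.symm
  -- combine
  intro t u htu
  have hu : u = n - 1 - t := by omega
  subst hu
  rcases Nat.lt_or_ge t 1 with h0 | h1
  · -- t = 0
    have : t = 0 := by omega
    subst this
    have : n - 1 - 0 = n - 1 := by omega
    rw [this]
    have := lie_E0 b hn hb (n - 1) (by omega)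
    rw [Evec_eq_zero b (n - 1 + 1) (by omega)] at this
    exact this
  rcases Nat.lt_or_ge t k with h | h
  · have hd : t = k - (k - t) := by omega
    rw [hd]
    exact hdown (k - t) (by omega)
  · exact hup t h
end Lemmas3
section Lemmas4
variable {K L : Type*} [Field K] [LieRing L] [LieAlgebra K L] {n : ℕ}
  (b : Basis (Fin n) K L) (hn : 3 ≤ n) (hb : IsAdaptedBasis hn b)

include hb

lemma bracket_sum_ge_n (hodd : Odd n)
    (hfil2 : LieModule.lowerCentralSeries K L L (n - 1) = ⊥) :
    ∀ t u : ℕ, n ≤ t + u → ⁅Evec b t, Evec b u⁆ = 0 := by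
  intro t
  induction t using Nat.strong_induction_on with
  | _ t ih =>
    intro u hsum
    rcases Nat.lt_or_ge u n with hu | hu
    · rcases Nat.lt_or_ge u (n - 1) with hu1 | hu1
      · -- u ≤ n - 2
        rcases Nat.lt_or_ge t n with ht | ht
        · rcases Nat.lt_or_ge t (n - 1) with ht1 | ht1
          · -- t ≤ n - 2, u ≤ n - 2, t + u ≥ n hence t, u ≥ 2
            have ht2 : 2 ≤ t := by omega
            have hu2 : 2 ≤ u := by omega
            have h0 : ⁅Evec b (t - 1), Evec b u⁆ = 0 := by
              rcases Nat.lt_or_ge ((t - 1) + u) n with hc | hc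
              · exact bracket_sum_n1 b hn hb hodd hfil2 (t - 1) u (by omega)
              · exact ih (t - 1) (by omega) u hc
            have h2 : ⁅Evec b (t - 1), Evec b (u + 1)⁆ = 0 := ih (t - 1) (by omega) (u + 1) (by omega)
            have hz : ⁅Evec b 0, ⁅Evec b (t - 1), Evec b u⁆⁆ = 0 := by rw [h0, lie_zero]
            rw [leibniz_lie] at hz
            rw [lie_E0 b hn hb (t - 1) (by omega)] at hz
            rw [lie_E0 b hn hb u (by omega)] at hz
            have he : t - 1 + 1 = t := by omega
            rw [he, h2, add_zero] at hz
            exact hz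
          · -- t = n - 1
            have : t = n - 1 := by omega
            subst this
            rw [← lie_skew, central' b hn hb hfil2, neg_zero]
        · rw [Evec_eq_zero b t ht, zero_lie]
      · -- u = n - 1
        have : u = n - 1 := by omega
        subst this
        exact central' b hn hb hfil2 _
    · rw [Evec_eq_zero b u hu, lie_zero]

lemma bracket_high (hodd : Odd n)
    (hfil2 : LieModule.lowerCentralSeries K L L (n - 1) = ⊥) :
    ∀ t u : ℕ, n - 1 ≤ t + u → ⁅Evec b t, Evec b u⁆ = 0 := by
  intro t u h
  rcases Nat.lt_or_ge (t + u) n with hc | hc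
  · exact bracket_sum_n1 b hn hb hodd hfil2 t u (by omega)
  · exact bracket_sum_ge_n b hn hb hodd hfil2 t u hc

end Lemmas4
section Lemmas5
variable {K L : Type*} [Field K] [LieRing L] [LieAlgebra K L] {n : ℕ}
  (b : Basis (Fin n) K L) (hn : 3 ≤ n) (hb : IsAdaptedBasis hn b)

lemma lie_gSpan_eq_zero (p q : ℕ)
    (hgen : ∀ j j' : Fin n, p ≤ j.val + 1 → q ≤ j'.val + 1 → ⁅b j, b j'⁆ = 0) :
    ∀ x ∈ gSpan b p, ∀ y ∈ gSpan b q, ⁅x, y⁆ = 0 := by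
  intro x hx
  induction hx using Submodule.span_induction with
  | mem x hxs =>
    intro y hy
    induction hy using Submodule.span_induction with
    | mem y hys =>
      obtain ⟨j, hj, rfl⟩ := hxs
      obtain ⟨j', hj', rfl⟩ := hys
      exact hgen j j' hj hj'
    | zero => simp
    | add y z hy hz ihy ihz => rw [lie_add, ihy, ihz, add_zero]
    | smul c y hy ihy => rw [lie_smul, ihy, smul_zero]
  | zero => intro y hy; simp
  | add x z hx hz ihx ihz => intro y hy; rw [add_lie, ihx y hy, ihz y hy, add_zero]
  | smul c x hx ihx => intro y hy; rw [smul_lie, ihx y hy, smul_zero]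

include hb

lemma exists_pair_coeff (t : ℕ) (ht : t ≤ n - 2) :
    ∃ c : K, ⁅Evec b t, Evec b (n - 2 - t)⁆ = c • Evec b (n - 1) := by
  have hmem := lie_E_gSpan b hn hb t (n - 2 - t) (by omega)
  have he : t + (n - 2 - t) + 2 = n := by omega
  rw [he] at hmem
  have h2 := gSpan_le_span_singleton b (by omega) hmem
  rw [Submodule.mem_span_singleton] at h2
  obtain ⟨c, hc⟩ := h2
  refine ⟨c, ?_⟩
  rw [Evec_eq b (n - 1) (by omega)]
  exact hc.symm

lemma pair_zero_all (hodd : Odd n)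
    (hfil2 : LieModule.lowerCentralSeries K L L (n - 1) = ⊥)
    (i : ℕ) (h1 : 1 ≤ i) (h2 : i ≤ n - 1)
    (hc : ⁅Evec b (i - 1), Evec b (n - i - 1)⁆ = 0) :
    ∀ x ∈ gSpan b i, ∀ y ∈ gSpan b (n - i), ⁅x, y⁆ = 0 := by
  apply lie_gSpan_eq_zero b i (n - i)
  intro j j' hj hj'
  rw [← Evec_eq b j.val j.isLt, ← Evec_eq b j'.val j'.isLt]
  rcases Nat.lt_or_ge (j.val + j'.val) (n - 1) with hs | hs
  · have hj1 : j.val = i - 1 := by omega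
    have hj2 : j'.val = n - i - 1 := by omega
    rw [hj1, hj2]
    exact hc
  · exact bracket_high b hn hb hodd hfil2 j.val j'.val hs

/-- The map `y ↦ (x ↦ ℓ ⁅x, y⁆)`. -/
def lieTmap (K L : Type*) [Field K] [LieRing L] [LieAlgebra K L] (ℓ : Module.Dual K L) :
    L →ₗ[K] Module.Dual K L where
  toFun y :=
    { toFun := fun x => ℓ ⁅x, y⁆
      map_add' := fun a c => by simp [add_lie]
      map_smul' := fun r a => by simp [smul_lie] }
  map_add' a c := by ext x; simp [lie_add]
  map_smul' r a := by ext x; simp [lie_smul]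

omit hb in
@[simp] lemma lieTmap_apply (ℓ : Module.Dual K L) (y x : L) :
    lieTmap K L ℓ y x = ℓ ⁅x, y⁆ := rfl

end Lemmas5
section Lemmas6
variable {K L : Type*} [Field K] [LieRing L] [LieAlgebra K L] [FiniteDimensional K L] {n : ℕ}
  (b : Basis (Fin n) K L) (hn : 3 ≤ n) (hb : IsAdaptedBasis hn b)

lemma stab_finrank_ge_two
    (i : ℕ) (h1 : 1 ≤ i) (h2 : i ≤ n - 1)
    (hcon : ∀ x ∈ gSpan b i, ∀ y ∈ gSpan b (n - i), ⁅x, y⁆ = (0 : L))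
    (ℓ : Module.Dual K L) : 2 ≤ finrank K (lieStab K L ℓ) := by
  classical
  have hfL : finrank K L = n := by rw [Module.finrank_eq_card_basis b, Fintype.card_fin]
  have hdW : finrank K (gSpan b i) = n + 1 - i := finrank_gSpan b i h1 (by omega)
  have hdV' : finrank K (gSpan b (n - i)) = n + 1 - (n - i) :=
    finrank_gSpan b (n - i) (by omega) (by omega)
  have hdV : finrank K (gSpan b (n - i)) = i + 1 := by omega
  set T' := (lieTmap K L ℓ).comp (gSpan b (n - i)).subtype with hT'
  have hrange : LinearMap.range T' ≤ (gSpan b i).dualAnnihilator := by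
    rintro f ⟨y, rfl⟩
    rw [Submodule.mem_dualAnnihilator]
    intro w hw
    show ℓ ⁅w, (y : L)⁆ = 0
    rw [hcon w hw (y : L) y.2, map_zero]
  have hannih : finrank K ((gSpan b i).dualAnnihilator) = i - 1 := by
    have e1 : finrank K (Module.Dual K (L ⧸ gSpan b i))
        = finrank K ((gSpan b i).dualAnnihilator) :=
      (Submodule.dualQuotEquivDualAnnihilator (gSpan b i)).finrank_eq
    have e2 : finrank K (Module.Dual K (L ⧸ gSpan b i)) = finrank K (L ⧸ gSpan b i) :=
      Subspace.dual_finrank_eq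
    have e3 := Submodule.finrank_quotient_add_finrank (gSpan b i)
    omega
  have hrank : finrank K (LinearMap.range T') ≤ i - 1 :=
    le_of_le_of_eq (Submodule.finrank_mono hrange) hannih
  have hrn := LinearMap.finrank_range_add_finrank_ker T'
  rw [hdV] at hrn
  have hker : 2 ≤ finrank K (LinearMap.ker T') := by omega
  have hmem : ∀ z : LinearMap.ker T',
      ((gSpan b (n - i)).subtype.comp (LinearMap.ker T').subtype) z ∈ lieStab K L ℓ := by
    intro z x
    have hz : T' z.1 = 0 := z.2
    have h3 : T' z.1 x = 0 := by rw [hz]; rfl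
    exact h3
  set φ := LinearMap.codRestrict (lieStab K L ℓ)
    ((gSpan b (n - i)).subtype.comp (LinearMap.ker T').subtype) hmem with hφ
  have hinj : Function.Injective φ := by
    intro a c hac
    have h4 := congrArg Subtype.val hac
    have h5 : (a.1 : L) = (c.1 : L) := h4
    exact Subtype.ext (Subtype.ext h5)
  have hfin := LinearMap.finrank_le_finrank_of_injective hinj
  omega

include hb

omit [FiniteDimensional K L] in
lemma stab_coord_eq (hodd : Odd n)
    (hfil2 : LieModule.lowerCentralSeries K L L (n - 1) = ⊥)
    (hpair : ∀ t : ℕ, t ≤ n - 2 → ⁅Evec b t, Evec b (n - 2 - t)⁆ ≠ 0) :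
    lieStab K L (b.coord ⟨n - 1, by omega⟩) = K ∙ b ⟨n - 1, by omega⟩ := by
  classical
  set ℓ₀ := b.coord ⟨n - 1, by omega⟩ with hℓ₀
  apply le_antisymm
  · intro y hy
    have hy' : ∀ x : L, ℓ₀ ⁅x, y⁆ = 0 := hy
    have hz : ∀ m : ℕ, ∀ j : Fin n, j.val = m → m ≤ n - 2 → b.repr y j = 0 := by
      intro m
      induction m using Nat.strong_induction_on with
      | _ m ih =>
        intro j hjm hm2
        set x := Evec b (n - 2 - m) with hx
        set g : L →ₗ[K] K :=
          { toFun := fun z => ℓ₀ ⁅x, z⁆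
            map_add' := fun a c => by simp [lie_add]
            map_smul' := fun r a => by simp [lie_smul] } with hg
        have hgy : g y = 0 := hy' x
        have hsum : ∑ jj : Fin n, b.repr y jj • g (b jj) = 0 := by
          have hexp : g y = ∑ jj : Fin n, b.repr y jj • g (b jj) := by
            conv_lhs => rw [← b.sum_repr y]
            rw [map_sum]
            simp only [map_smul]
          rw [← hexp, hgy]
        rw [Finset.sum_eq_single j] at hsum
        · obtain ⟨c, hc⟩ := exists_pair_coeff b hn hb (n - 2 - m) (by omega)
          have hmm : n - 2 - (n - 2 - m) = m := by omega
          rw [hmm] at hc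
          have hcne : c ≠ 0 := by
            intro h0
            rw [h0, zero_smul] at hc
            apply hpair m hm2
            rw [← lie_skew, hc, neg_zero]
          have hgbj : g (b j) = c := by
            have hbj : (b j : L) = Evec b m := by rw [← hjm, Evec_eq b j.val j.isLt]
            show ℓ₀ ⁅x, b j⁆ = c
            rw [hbj, hx, hc, map_smul, Evec_eq b (n - 1) (by omega)]
            rw [hℓ₀]
            simp [Basis.coord_apply]
          rw [hgbj, smul_eq_mul] at hsum
          rcases mul_eq_zero.mp hsum with h | h
          · exact h
          · exact absurd h hcne
        · intro i2 _ hne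
          rcases Nat.lt_or_ge i2.val m with hlt | hge
          · rw [ih i2.val hlt i2 rfl (by omega), zero_smul]
          · have hgt : m < i2.val := by
              rcases Nat.lt_or_ge m i2.val with h | h
              · exact h
              · exfalso
                apply hne
                apply Fin.ext
                omega
            have hgz : g (b i2) = 0 := by
              have hb0 : ⁅x, b i2⁆ = 0 := by
                rw [← Evec_eq b i2.val i2.isLt, hx]
                exact bracket_high b hn hb hodd hfil2 (n - 2 - m) i2.val (by omega)
              show ℓ₀ ⁅x, b i2⁆ = 0
              rw [hb0, map_zero]
            rw [hgz, smul_zero]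
        · intro hj
          exact absurd (Finset.mem_univ j) hj
    rw [Submodule.mem_span_singleton]
    refine ⟨b.repr y ⟨n - 1, by omega⟩, ?_⟩
    apply b.repr.injective
    ext jj
    rw [map_smul, Basis.repr_self]
    by_cases hjj : jj = (⟨n - 1, by omega⟩ : Fin n)
    · subst hjj
      simp
    · have h1 : (Finsupp.single (⟨n - 1, by omega⟩ : Fin n) (1 : K)) jj = 0 := by
        rw [Finsupp.single_apply]
        simp [Ne.symm hjj]
      rw [Finsupp.smul_apply, h1, smul_zero]
      have : jj.val ≤ n - 2 := by
        have := jj.isLt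
        rcases Nat.lt_or_ge jj.val (n - 1) with h | h
        · omega
        · exfalso
          apply hjj
          apply Fin.ext
          show jj.val = n - 1
          omega
      exact (hz jj.val jj rfl this).symm
  · rw [Submodule.span_singleton_le_iff_mem]
    intro x
    rw [central b hn hb hfil2 x, map_zero]

end Lemmas6

/-- An odd-dimensional filiform Lie algebra has index `1` if and only if
`[g_i, g_{n-i}] ≠ 0` for all `i = 1, …, n-1`. -/
theorem filiform_index_one_iff
    (K L : Type*) [Field K] [CharZero K] [LieRing L] [LieAlgebra K L]
    [FiniteDimensional K L] (n : ℕ) (hn : 3 ≤ n) (hodd : Odd n)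
    (hfil : IsFiliform K L n) (b : Basis (Fin n) K L) (hb : IsAdaptedBasis (by omega) b) :
    lieIndex K L = 1 ↔
      ∀ i : ℕ, 1 ≤ i → i ≤ n - 1 →
        ∃ x ∈ gSpan b i, ∃ y ∈ gSpan b (n - i), ⁅x, y⁆ ≠ (0 : L) := by
  have hfil2 : LieModule.lowerCentralSeries K L L (n - 1) = ⊥ := hfil.2.1
  have hb' : IsAdaptedBasis hn b := hb
  constructor
  · intro hidx i h1 h2
    by_contra hcon
    push_neg at hcon
    have hge := stab_finrank_ge_two b i h1 h2 hcon
    have hne : {d | ∃ ℓ : Module.Dual K L, d = finrank K (lieStab K L ℓ)}.Nonempty :=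
      ⟨finrank K (lieStab K L 0), 0, rfl⟩
    have hmem := Nat.sInf_mem hne
    have hidx' : sInf {d | ∃ ℓ : Module.Dual K L, d = finrank K (lieStab K L ℓ)} = 1 := hidx
    rw [hidx'] at hmem
    obtain ⟨ℓ, hℓ⟩ := hmem
    have := hge ℓ
    omega
  · intro hrhs
    have hpair : ∀ t : ℕ, t ≤ n - 2 → ⁅Evec b t, Evec b (n - 2 - t)⁆ ≠ 0 := by
      intro t ht hc0
      have h1 : 1 ≤ t + 1 := by omega
      have h2 : t + 1 ≤ n - 1 := by omega
      obtain ⟨x, hx, y, hy, hxy⟩ := hrhs (t + 1) h1 h2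
      apply hxy
      have hcc : ⁅Evec b (t + 1 - 1), Evec b (n - (t + 1) - 1)⁆ = 0 := by
        have he1 : t + 1 - 1 = t := by omega
        have he2 : n - (t + 1) - 1 = n - 2 - t := by omega
        rw [he1, he2]
        exact hc0
      exact pair_zero_all b hn hb' hodd hfil2 (t + 1) h1 h2 hcc x hx y hy
    have hstab := stab_coord_eq b hn hb' hodd hfil2 hpair
    have hrank1 : finrank K (lieStab K L (b.coord ⟨n - 1, by omega⟩)) = 1 := by
      rw [hstab]
      exact finrank_span_singleton (b.ne_zero _)
    have hS1 : (1 : ℕ) ∈ {d | ∃ ℓ : Module.Dual K L, d = finrank K (lieStab K L ℓ)} :=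
      ⟨_, hrank1.symm⟩
    have hlow : ∀ d ∈ {d | ∃ ℓ : Module.Dual K L, d = finrank K (lieStab K L ℓ)}, 1 ≤ d := by
      rintro d ⟨ℓ, rfl⟩
      have hmem0 : b ⟨n - 1, by omega⟩ ∈ lieStab K L ℓ := by
        intro x
        rw [central b hn hb' hfil2 x, map_zero]
      have hnontriv : Nontrivial (lieStab K L ℓ) := by
        refine ⟨⟨_, hmem0⟩, 0, ?_⟩
        intro hcontra
        exact b.ne_zero _ (congrArg Subtype.val hcontra)
      have hpos : 0 < finrank K (lieStab K L ℓ) := Module.finrank_pos_iff.mpr hnontriv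
      omega
    exact le_antisymm (Nat.sInf_le hS1) (le_csInf ⟨1, hS1⟩ hlow)
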